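/- arXiv:2110.05279 — 2 statements merged into one kernel-verified Lean document; each statement's English description precedes it below -/
import Mathlib

section
/- Let g(t) = ∫_0^r (1/(2α)) 1{|t| ≤ α} dρ(α) for a probability measure ρ on [0,r], and let g' be the density obtained by moving mass ε of ρ from a point α to a point α' > α. Then the differential entropy does not decrease: H(g') ≥ H(g). -/
open MeasureTheory ProbabilityTheory Real
open scoped ENNReal ProbabilityTheory

noncomputable section

abbrev Ed (d : ℕ) : Type := EuclideanSpace ℝ (Fin d)

open Classical in
/-- Kullback-Leibler divergence, set to `∞` when the first measure is not absolutely
continuous w.r.t. the second or the log-likelihood ratio is not integrable. -/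
def klD {α : Type*} [MeasurableSpace α] (μ ν : Measure α) : ℝ≥0∞ :=
  if μ ≪ ν ∧ Integrable (llr μ ν) μ then ENNReal.ofReal (∫ x, llr μ ν x ∂μ) else ⊤

/-- Mutual information between two random variables. -/
def MI {Ω α β : Type*} [MeasurableSpace Ω] [MeasurableSpace α] [MeasurableSpace β]
    (μ : Measure Ω) (A : Ω → α) (B : Ω → β) : ℝ≥0∞ :=
  klD (μ.map fun ω => (A ω, B ω)) ((μ.map A).prod (μ.map B))

/-- Uniform distribution on the unit sphere of `ℝ^d`, viewed as a measure on
the ambient space (normalized surface measure). -/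
def sphereUnif (d : ℕ) : Measure (Ed d) :=
  if d = 0 then Measure.dirac 0 else
    ((volume : Measure (Ed d)).toSphere Set.univ)⁻¹ •
      ((volume : Measure (Ed d)).toSphere.map Subtype.val)

instance sphereUnif.isProbabilityMeasure (d : ℕ) : IsProbabilityMeasure (sphereUnif d) := by
  constructor
  rcases Nat.eq_zero_or_pos d with h | h
  · subst h; simp [sphereUnif]
  · rw [sphereUnif, if_neg h.ne', Measure.smul_apply,
      Measure.map_apply measurable_subtype_coe MeasurableSet.univ]
    simp only [Set.preimage_univ, smul_eq_mul]
    refine ENNReal.inv_mul_cancel ?_ (measure_ne_top _ _)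
    rw [Measure.toSphere_apply_univ]
    refine mul_ne_zero ?_ (Metric.measure_ball_pos _ _ one_pos).ne'
    simp [finrank_euclideanSpace_fin, h.ne']

/-- Sliced mutual information. -/
def SMI {Ω : Type*} [MeasurableSpace Ω] {dx dy : ℕ} (μ : Measure Ω)
    (X : Ω → Ed dx) (Y : Ω → Ed dy) : ℝ≥0∞ :=
  ∫⁻ θ, ∫⁻ φ, MI μ (fun ω => (inner ℝ θ (X ω) : ℝ)) (fun ω => (inner ℝ φ (Y ω) : ℝ))
    ∂(sphereUnif dy) ∂(sphereUnif dx)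

/-- Conditional mutual information `I(A;B|C)`. -/
def condMI {Ω α β γ : Type*} [MeasurableSpace Ω] [MeasurableSpace α] [MeasurableSpace β]
    [MeasurableSpace γ] [StandardBorelSpace α] [Nonempty α] [StandardBorelSpace β] [Nonempty β]
    (μ : Measure Ω) [IsFiniteMeasure μ] (A : Ω → α) (B : Ω → β) (C : Ω → γ) : ℝ≥0∞ :=
  haveI : IsFiniteMeasure (μ.map fun ω => (C ω, A ω)) := μ.isFiniteMeasure_map _
  haveI : IsFiniteMeasure (μ.map fun ω => (C ω, B ω)) := μ.isFiniteMeasure_map _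
  klD (μ.map fun ω => (C ω, (A ω, B ω)))
    ((μ.map C) ⊗ₘ
      ((μ.map fun ω => (C ω, A ω)).condKernel ×ₖ (μ.map fun ω => (C ω, B ω)).condKernel))

/-- Differential entropy of a distribution on `ℝ`. -/
def dEnt (ν : Measure ℝ) : ℝ := ∫ x, Real.negMulLog ((ν.rnDeriv volume x).toReal)

/-- Sliced entropy of a distribution on `ℝ^d`. -/
def SH {d : ℕ} (P : Measure (Ed d)) : ℝ :=
  ∫ θ, dEnt (P.map fun x => (inner ℝ θ x : ℝ)) ∂(sphereUnif d)

/-!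
Write `g' = g - δ` with `δ = ε (u_a - u_{a'})`, where `u_x` is the uniform density on `[-x, x]`.
Concavity of `negMulLog` at `g'` gives `negMulLog g' - negMulLog g ≥ δ (log g' + 1)`, and
`∫ δ (log g' + 1) = ε (⨍_{[-a, a]} h - ⨍_{[-a', a']} h)` for `h = log g' + 1`, which is nonnegative
because `h` is nonincreasing in `|t|`: a radially decreasing function has a larger average on the
smaller interval. The atom of `ρ'` at `a'` bounds `g'` below on `[-a', a']`, and
`g, g' ≤ 1 / (2|t|)`, so all logarithms involved are integrable and the entropy difference is a
genuine integral.
-/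

open Set

namespace Real

theorem negMulLog_le_add_mul_log_add_one {x y : ℝ} (hx : 0 < x) (hy : 0 ≤ y) :
    negMulLog y ≤ negMulLog x + (x - y) * (log x + 1) := by
  have hsplit := negMulLog_mul x (y / x)
  rw [mul_div_cancel₀ y hx.ne'] at hsplit
  have hle := mul_le_mul_of_nonneg_left (negMulLog_le_one_sub_self (div_nonneg hy hx.le)) hx.le
  rw [hsplit, negMulLog]
  calc y / x * (-x * log x) + x * negMulLog (y / x)
      ≤ y / x * (-x * log x) + x * (1 - y / x) := by gcongr
    _ = -x * log x + (x - y) * (log x + 1) := by field_simp; ring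

theorem negMulLog_sub_le {x y : ℝ} (hx : 0 ≤ x) (hy : 0 ≤ y) :
    negMulLog y - negMulLog x ≤ |x - y| * (1 + |log x| + |log y|) := by
  rcases hx.eq_or_lt with rfl | hx
  · simp only [negMulLog, zero_sub, abs_neg, abs_of_nonneg hy, log_zero, abs_zero, neg_mul,
      neg_zero]
    nlinarith [neg_abs_le (log y), abs_nonneg (log y)]
  · have hslope : (x - y) * (log x + 1) ≤ |x - y| * (1 + |log x| + |log y|) := by
      calc (x - y) * (log x + 1) ≤ |x - y| * |log x + 1| := by
            rw [← abs_mul]; exact le_abs_self _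
        _ ≤ |x - y| * (1 + |log x| + |log y|) := by
            gcongr
            linarith [abs_add_le (log x) 1, abs_one (α := ℝ), abs_nonneg (log y)]
    linarith [negMulLog_le_add_mul_log_add_one hx hy]

theorem abs_negMulLog_sub_le {x y : ℝ} (hx : 0 ≤ x) (hy : 0 ≤ y) :
    |negMulLog x - negMulLog y| ≤ |x - y| * (1 + |log x| + |log y|) := by
  refine abs_sub_le_iff.2 ⟨?_, negMulLog_sub_le hx hy⟩
  simpa only [abs_sub_comm x y, add_right_comm] using negMulLog_sub_le hy hx

end Real

namespace MeasureTheory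

variable {α : Type*} [MeasurableSpace α] {μ : Measure α}

theorem setAverage_le_setAverage_of_subset {f : α → ℝ} {s t : Set α} (m : ℝ) (hst : s ⊆ t)
    (hs : MeasurableSet s) (hs₀ : μ s ≠ 0) (ht : μ t ≠ ∞) (hf : IntegrableOn f t μ)
    (h_ge : ∀ᵐ x ∂μ.restrict s, m ≤ f x) (h_le : ∀ᵐ x ∂μ.restrict (t \ s), f x ≤ m) :
    ⨍ x in t, f x ∂μ ≤ ⨍ x in s, f x ∂μ := by
  have hs_pos : 0 < μ.real s := ENNReal.toReal_pos hs₀ (measure_ne_top_of_subset hst ht)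
  have h_inner : μ.real s • m ≤ ∫ x in s, f x ∂μ := by
    rw [← setIntegral_const]
    exact setIntegral_mono_ae_restrict (integrableOn_const (measure_ne_top_of_subset hst ht))
      (hf.mono_set hst) h_ge
  have h_outer : ∫ x in t \ s, f x ∂μ ≤ μ.real (t \ s) • m := by
    rw [← setIntegral_const]
    exact setIntegral_mono_ae_restrict (hf.mono_set sdiff_subset)
      (integrableOn_const (measure_ne_top_of_subset sdiff_subset ht)) h_le
  rw [setIntegral_sdiff hs hf hst, measureReal_sdiff hst hs ht, smul_eq_mul] at h_outer
  rw [smul_eq_mul] at h_inner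
  rw [setAverage_eq, setAverage_eq, smul_eq_mul, smul_eq_mul, ← div_eq_inv_mul,
    ← div_eq_inv_mul, div_le_div_iff₀ (hs_pos.trans_le (measureReal_mono hst ht)) hs_pos]
  nlinarith [measureReal_mono (μ := μ) hst ht]

theorem integral_le_integral_of_integrable_sub {f g : α → ℝ} (h : Integrable (g - f) μ)
    (h_nonneg : 0 ≤ ∫ x, (g - f) x ∂μ) : ∫ x, f x ∂μ ≤ ∫ x, g x ∂μ := by
  by_cases hf : Integrable f μ
  · have hg : Integrable g μ := by simpa using hf.add h
    rw [integral_sub' hg hf] at h_nonneg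
    linarith
  · have hg : ¬Integrable g μ := fun hg => hf (by simpa using hg.sub h)
    rw [integral_undef hf, integral_undef hg]

theorem integral_add_smul_dirac_eq [MeasurableSingletonClass α] {ν : Measure α} {c : ℝ≥0∞}
    {a b : α} (h : μ + c • Measure.dirac a = ν + c • Measure.dirac b)
    (hc : c ≠ ∞) {f : α → ℝ} (hμ : Integrable f μ) (hν : Integrable f ν) :
    ∫ x, f x ∂μ + c.toReal * f a = ∫ x, f x ∂ν + c.toReal * f b := by
  have h_int := congrArg (fun ξ => ∫ x, f x ∂ξ) h
  rwa [integral_add_measure hμ ((integrable_dirac (by simp)).smul_measure hc),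
    integral_add_measure hν ((integrable_dirac (by simp)).smul_measure hc),
    integral_smul_measure, integral_smul_measure, integral_dirac, integral_dirac, smul_eq_mul,
    smul_eq_mul] at h_int

theorem le_measure_singleton_of_add_smul_dirac_eq [MeasurableSingletonClass α] {ν : Measure α}
    {c : ℝ≥0∞} {a b : α}
    (h : μ + c • Measure.dirac a = ν + c • Measure.dirac b) (hab : a ≠ b) : c ≤ μ {b} := by
  have h_atom : μ {b} = ν {b} + c := by simpa [hab] using congrArg (· {b}) h
  exact h_atom ▸ le_add_self

end MeasureTheory

def unifDensity (x t : ℝ) : ℝ := if |t| ≤ x then 1 / (2 * x) else 0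

/-- Density of `R * U` for independent `R ∼ μ` and `U` uniform on `[-1, 1]`. -/
def unifMixtureDensity (μ : Measure ℝ) (t : ℝ) : ℝ := ∫ x, unifDensity x t ∂μ

section unifDensity

variable {x t : ℝ}

theorem unifDensity_of_abs_le (h : |t| ≤ x) : unifDensity x t = 1 / (2 * x) := if_pos h

theorem unifDensity_of_lt_abs (h : x < |t|) : unifDensity x t = 0 := if_neg h.not_ge

theorem unifDensity_nonneg (x t : ℝ) : 0 ≤ unifDensity x t := by
  unfold unifDensity
  split_ifs with h
  · have : 0 ≤ x := (abs_nonneg t).trans h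
    positivity
  · rfl

theorem unifDensity_le (ht : t ≠ 0) : unifDensity x t ≤ (2 * |t|)⁻¹ := by
  unfold unifDensity
  split_ifs with h
  · rw [one_div]; gcongr
  · positivity

theorem unifDensity_anti {s : ℝ} (hst : |s| ≤ |t|) : unifDensity x t ≤ unifDensity x s := by
  by_cases h : |t| ≤ x
  · rw [unifDensity_of_abs_le h, unifDensity_of_abs_le (hst.trans h)]
  · rw [unifDensity_of_lt_abs (not_le.1 h)]
    exact unifDensity_nonneg x s

theorem unifDensity_eq_indicator (x : ℝ) :
    unifDensity x = (Icc (-x) x).indicator fun _ => 1 / (2 * x) := by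
  ext t
  simp only [unifDensity, indicator, mem_Icc, ← abs_le]

theorem measurable_uncurry_unifDensity : Measurable (Function.uncurry unifDensity) :=
  Measurable.ite (measurableSet_le measurable_snd.abs measurable_fst)
    (measurable_const.div (measurable_fst.const_mul 2)) measurable_const

theorem unifDensity_mul_eq_indicator (x : ℝ) (h : ℝ → ℝ) :
    (fun t => unifDensity x t * h t) = (Icc (-x) x).indicator fun t => 1 / (2 * x) * h t := by
  ext t
  rw [unifDensity_eq_indicator, indicator_mul_left]

theorem integrable_unifDensity_mul {h : ℝ → ℝ} (hh : IntegrableOn h (Icc (-x) x)) :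
    Integrable fun t => unifDensity x t * h t := by
  rw [unifDensity_mul_eq_indicator, integrable_indicator_iff measurableSet_Icc]
  exact hh.const_mul _

theorem integral_unifDensity_mul (hx : 0 < x) (h : ℝ → ℝ) :
    ∫ t, unifDensity x t * h t = ⨍ t in Icc (-x) x, h t := by
  rw [unifDensity_mul_eq_indicator, integral_indicator measurableSet_Icc, integral_const_mul,
    setAverage_eq, smul_eq_mul, measureReal_def, Real.volume_Icc,
    ENNReal.toReal_ofReal (by linarith), one_div]
  ring

theorem integral_unifDensity_sub_mul_nonneg {a b : ℝ} {h : ℝ → ℝ} (ha : 0 < a) (hab : a ≤ b)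
    (hh : IntegrableOn h (Icc (-b) b))
    (h_anti : ∀ s t, s ≠ 0 → |s| ≤ |t| → |t| ≤ b → h t ≤ h s) :
    0 ≤ ∫ t, (unifDensity a t - unifDensity b t) * h t := by
  have hsub : Icc (-a) a ⊆ Icc (-b) b := Icc_subset_Icc (neg_le_neg hab) hab
  simp_rw [sub_mul]
  rw [integral_sub (integrable_unifDensity_mul (hh.mono_set hsub)) (integrable_unifDensity_mul hh),
    integral_unifDensity_mul ha, integral_unifDensity_mul (ha.trans_le hab), sub_nonneg]
  refine setAverage_le_setAverage_of_subset (h a) hsub measurableSet_Icc ?_ ?_ hh ?_ ?_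
  · simp [Real.volume_Icc, ha]
  · simp [Real.volume_Icc]
  · filter_upwards [ae_restrict_mem measurableSet_Icc, ae_restrict_of_ae (volume.ae_ne 0)]
      with t ht ht0
    have hta : |t| ≤ |a| := by rw [abs_of_pos ha]; exact abs_le.2 ht
    exact h_anti t a ht0 hta ((abs_of_pos ha).trans_le hab)
  · refine ae_restrict_of_forall_mem (measurableSet_Icc.diff measurableSet_Icc) fun t ht => ?_
    have hat : a < |t| := lt_of_not_ge fun h => ht.2 (abs_le.1 h)
    exact h_anti a t ha.ne' ((abs_of_pos ha).trans_lt hat).le (abs_le.2 ht.1)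

end unifDensity

section unifMixtureDensity

variable {μ : Measure ℝ} {t : ℝ}

theorem integrable_unifDensity_of_ne_zero [IsFiniteMeasure μ] (ht : t ≠ 0) :
    Integrable (fun x => unifDensity x t) μ :=
  .of_bound measurable_uncurry_unifDensity.of_uncurry_right.aestronglyMeasurable (2 * |t|)⁻¹
    (ae_of_all _ fun x => by
      rw [Real.norm_of_nonneg (unifDensity_nonneg x t)]; exact unifDensity_le ht)

theorem measurable_unifMixtureDensity [SFinite μ] : Measurable (unifMixtureDensity μ) :=
  (measurable_uncurry_unifDensity.comp measurable_swap).stronglyMeasurable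
    |>.integral_prod_right' |>.measurable

theorem unifMixtureDensity_nonneg (μ : Measure ℝ) (t : ℝ) : 0 ≤ unifMixtureDensity μ t :=
  integral_nonneg fun x => unifDensity_nonneg x t

theorem unifMixtureDensity_le [IsProbabilityMeasure μ] (ht : t ≠ 0) :
    unifMixtureDensity μ t ≤ (2 * |t|)⁻¹ := by
  calc unifMixtureDensity μ t ≤ ∫ _, (2 * |t|)⁻¹ ∂μ :=
        integral_mono (integrable_unifDensity_of_ne_zero ht) (integrable_const _)
          fun x => unifDensity_le ht
    _ = (2 * |t|)⁻¹ := by simp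

theorem measureReal_mul_unifDensity_le [IsFiniteMeasure μ] (ht : t ≠ 0) (c : ℝ) :
    μ.real {c} * unifDensity c t ≤ unifMixtureDensity μ t := by
  rw [← smul_eq_mul, ← integral_singleton (fun x => unifDensity x t) c]
  exact setIntegral_le_integral (integrable_unifDensity_of_ne_zero ht)
    (ae_of_all _ fun x => unifDensity_nonneg x t)

theorem unifMixtureDensity_anti [IsFiniteMeasure μ] {s : ℝ} (hs : s ≠ 0) (hst : |s| ≤ |t|) :
    unifMixtureDensity μ t ≤ unifMixtureDensity μ s := by
  have ht : t ≠ 0 := abs_pos.1 ((abs_pos.2 hs).trans_le hst)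
  exact integral_mono (integrable_unifDensity_of_ne_zero ht) (integrable_unifDensity_of_ne_zero hs)
    fun x => unifDensity_anti hst

theorem unifMixtureDensity_pos [IsFiniteMeasure μ] {b : ℝ} (hμb : μ {b} ≠ 0) (ht : t ≠ 0)
    (htb : |t| ≤ b) : 0 < unifMixtureDensity μ t := by
  have hb : 0 < b := (abs_pos.2 ht).trans_le htb
  refine (mul_pos (ENNReal.toReal_pos hμb (measure_ne_top _ _)) ?_).trans_le
    (measureReal_mul_unifDensity_le ht b)
  rw [unifDensity_of_abs_le htb]
  positivity

theorem integrableOn_negMulLog_unifMixtureDensity [IsProbabilityMeasure μ] {a : ℝ} {s : Set ℝ}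
    (ha : 0 < a) (hs : s ⊆ {t | a < |t|}) (hs_fin : volume s ≠ ∞) :
    IntegrableOn (fun t => negMulLog (unifMixtureDensity μ t)) s := by
  obtain ⟨K, hK⟩ := (isCompact_Icc (a := 0) (b := (2 * a)⁻¹)).exists_bound_of_continuousOn
    continuous_negMulLog.continuousOn
  refine Measure.integrableOn_of_bounded (M := K) hs_fin
    (continuous_negMulLog.measurable.comp measurable_unifMixtureDensity).aestronglyMeasurable ?_
  refine ae_restrict_of_ae_restrict_of_subset hs
    (ae_restrict_of_forall_mem (measurableSet_lt measurable_const measurable_abs) fun t hat => ?_)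
  refine hK _ ⟨unifMixtureDensity_nonneg μ t, ?_⟩
  exact (unifMixtureDensity_le (abs_pos.1 (ha.trans hat))).trans (by gcongr; exact hat.le)

theorem integrableOn_log_unifMixtureDensity [IsProbabilityMeasure μ] {b : ℝ} (hb : 0 < b)
    (hμb : μ {b} ≠ 0) : IntegrableOn (fun t => log (unifMixtureDensity μ t)) (Icc (-b) b) := by
  set m := μ.real {b} * (1 / (2 * b))
  have hm : 0 < m := mul_pos (ENNReal.toReal_pos hμb (measure_ne_top _ _)) (by positivity)
  have h_bound : ∀ t ∈ Icc (-b) b, t ≠ 0 →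
      |log (unifMixtureDensity μ t)| ≤ |log m| + log 2 + |log t| := by
    intro t ht ht0
    have h_lower : m ≤ unifMixtureDensity μ t := by
      simpa only [unifDensity_of_abs_le (abs_le.2 ht)] using
        measureReal_mul_unifDensity_le (μ := μ) ht0 b
    have h_upper := unifMixtureDensity_le (μ := μ) ht0
    have h_log_lower := log_le_log hm h_lower
    have h_log_upper := log_le_log (hm.trans_le h_lower) h_upper
    rw [log_inv, log_mul two_ne_zero (abs_ne_zero.2 ht0), log_abs] at h_log_upper
    have h_log_two := log_nonneg (one_le_two (α := ℝ))
    have h_abs_m := neg_abs_le (log m)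
    have h_abs_t := neg_le_abs (log t)
    rw [abs_le]
    constructor <;> linarith [abs_nonneg (log m), abs_nonneg (log t)]
  have h_dom : IntegrableOn (fun t => |log m| + log 2 + |log t|) (Icc (-b) b) := by
    refine (integrableOn_const measure_Icc_lt_top.ne).add ?_
    exact (intervalIntegrable_iff_integrableOn_Icc_of_le (by linarith)).1
      intervalIntegral.intervalIntegrable_log'.abs
  refine h_dom.mono' (measurable_unifMixtureDensity.log).aestronglyMeasurable.restrict ?_
  filter_upwards [ae_restrict_mem measurableSet_Icc, ae_restrict_of_ae (volume.ae_ne 0)]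
    with t ht ht0
  exact h_bound t ht ht0

theorem unifMixtureDensity_sub_eq {ρ ρ' : Measure ℝ} [IsFiniteMeasure ρ] [IsFiniteMeasure ρ']
    {a a' ε : ℝ} (hε : 0 ≤ ε)
    (hmove : ρ' + ENNReal.ofReal ε • Measure.dirac a = ρ + ENNReal.ofReal ε • Measure.dirac a')
    {t : ℝ} (ht : t ≠ 0) :
    unifMixtureDensity ρ t - unifMixtureDensity ρ' t =
      ε * (unifDensity a t - unifDensity a' t) := by
  have h := integral_add_smul_dirac_eq hmove ENNReal.ofReal_ne_top
    (integrable_unifDensity_of_ne_zero ht) (integrable_unifDensity_of_ne_zero ht)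
  rw [ENNReal.toReal_ofReal hε] at h
  unfold unifMixtureDensity
  linarith

theorem unifMixtureDensity_eq_of_lt_abs {ρ ρ' : Measure ℝ} [IsFiniteMeasure ρ]
    [IsFiniteMeasure ρ'] {a a' ε : ℝ} (hε : 0 ≤ ε)
    (hmove : ρ' + ENNReal.ofReal ε • Measure.dirac a = ρ + ENNReal.ofReal ε • Measure.dirac a')
    {t : ℝ} (ht : t ≠ 0) (hat : a < |t|) (ha't : a' < |t|) :
    unifMixtureDensity ρ' t = unifMixtureDensity ρ t := by
  have h := unifMixtureDensity_sub_eq hε hmove ht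
  rw [unifDensity_of_lt_abs hat, unifDensity_of_lt_abs ha't] at h
  linarith

end unifMixtureDensity

section transport

variable {ρ ρ' : Measure ℝ} [IsProbabilityMeasure ρ] [IsProbabilityMeasure ρ'] {a a' ε : ℝ}

theorem integrable_negMulLog_unifMixtureDensity_sub (ha : 0 < a) (haa' : a < a') (hε : 0 < ε)
    (hmass : ENNReal.ofReal ε ≤ ρ {a})
    (hmove : ρ' + ENNReal.ofReal ε • Measure.dirac a = ρ + ENNReal.ofReal ε • Measure.dirac a') :
    Integrable fun t =>
      negMulLog (unifMixtureDensity ρ' t) - negMulLog (unifMixtureDensity ρ t) := by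
  set g := unifMixtureDensity ρ
  set g' := unifMixtureDensity ρ'
  have hsub : Icc (-a) a ⊆ Icc (-a') a' := Icc_subset_Icc (by linarith) haa'.le
  have hD : Measurable fun t => negMulLog (g' t) - negMulLog (g t) :=
    (continuous_negMulLog.measurable.comp measurable_unifMixtureDensity).sub
      (continuous_negMulLog.measurable.comp measurable_unifMixtureDensity)
  have h_atom : ρ {a} ≠ 0 := ((ENNReal.ofReal_pos.2 hε).trans_le hmass).ne'
  have h_atom' : ρ' {a'} ≠ 0 :=
    ((ENNReal.ofReal_pos.2 hε).trans_le
      (le_measure_singleton_of_add_smul_dirac_eq hmove haa'.ne)).ne'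
  have h_inner : IntegrableOn (fun t => negMulLog (g' t) - negMulLog (g t)) (Icc (-a) a) := by
    set C := |ε * (1 / (2 * a) - 1 / (2 * a'))|
    have h_dom : IntegrableOn (fun t => C * (1 + |log (g' t)| + |log (g t)|)) (Icc (-a) a) :=
      (((integrableOn_const measure_Icc_lt_top.ne).add
        ((integrableOn_log_unifMixtureDensity (ha.trans haa') h_atom').mono_set hsub).abs).add
        (integrableOn_log_unifMixtureDensity ha h_atom).abs).const_mul C
    refine h_dom.mono' hD.aestronglyMeasurable.restrict ?_
    filter_upwards [ae_restrict_mem measurableSet_Icc, ae_restrict_of_ae (volume.ae_ne 0)]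
      with t ht ht0
    have hta : |t| ≤ a := abs_le.2 ht
    have h_gap : |g' t - g t| = C := by
      rw [abs_sub_comm, unifMixtureDensity_sub_eq hε.le hmove ht0, unifDensity_of_abs_le hta,
        unifDensity_of_abs_le (hta.trans haa'.le)]
    rw [Real.norm_eq_abs, ← h_gap]
    exact abs_negMulLog_sub_le (unifMixtureDensity_nonneg _ _) (unifMixtureDensity_nonneg _ _)
  have h_annulus : IntegrableOn (fun t => negMulLog (g' t) - negMulLog (g t))
      (Icc (-a') a' \ Icc (-a) a) := by
    have hs : Icc (-a') a' \ Icc (-a) a ⊆ {t | a < |t|} := fun t ht =>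
      lt_of_not_ge fun h => ht.2 (abs_le.1 h)
    have hs_fin : volume (Icc (-a') a' \ Icc (-a) a) ≠ ∞ :=
      measure_ne_top_of_subset sdiff_subset measure_Icc_lt_top.ne
    exact (integrableOn_negMulLog_unifMixtureDensity ha hs hs_fin).sub
      (integrableOn_negMulLog_unifMixtureDensity ha hs hs_fin)
  refine IntegrableOn.integrable_of_forall_notMem_eq_zero
    (s := Icc (-a') a') (by simpa [union_sdiff_cancel hsub] using h_inner.union h_annulus) ?_
  intro t ht
  have hat : a' < |t| := lt_of_not_ge fun h => ht (abs_le.1 h)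
  have h_eq : g' t = g t := unifMixtureDensity_eq_of_lt_abs hε.le hmove
    (abs_pos.1 ((ha.trans haa').trans hat)) (haa'.trans hat) hat
  rw [h_eq, sub_self]

theorem integral_negMulLog_unifMixtureDensity_sub_nonneg (ha : 0 < a) (haa' : a < a')
    (hε : 0 < ε) (hmass : ENNReal.ofReal ε ≤ ρ {a})
    (hmove : ρ' + ENNReal.ofReal ε • Measure.dirac a = ρ + ENNReal.ofReal ε • Measure.dirac a') :
    0 ≤ ∫ t, (negMulLog (unifMixtureDensity ρ' t) - negMulLog (unifMixtureDensity ρ t)) := by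
  set g := unifMixtureDensity ρ
  set g' := unifMixtureDensity ρ'
  set H := fun t => log (g' t) + 1
  have ha' : 0 < a' := ha.trans haa'
  have h_atom' : ρ' {a'} ≠ 0 :=
    ((ENNReal.ofReal_pos.2 hε).trans_le
      (le_measure_singleton_of_add_smul_dirac_eq hmove haa'.ne)).ne'
  have hH : IntegrableOn H (Icc (-a') a') :=
    (integrableOn_log_unifMixtureDensity ha' h_atom').add
      (integrableOn_const measure_Icc_lt_top.ne)
  have hH_anti : ∀ s t, s ≠ 0 → |s| ≤ |t| → |t| ≤ a' → H t ≤ H s := fun s t hs hst ht =>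
    have ht0 : t ≠ 0 := abs_pos.1 ((abs_pos.2 hs).trans_le hst)
    add_le_add_left (log_le_log (unifMixtureDensity_pos h_atom' ht0 ht)
      (unifMixtureDensity_anti hs hst)) 1
  have h_tangent : ∀ t, t ≠ 0 → ε * ((unifDensity a t - unifDensity a' t) * H t) ≤
      negMulLog (g' t) - negMulLog (g t) := by
    intro t ht0
    have h_gap : g t - g' t = ε * (unifDensity a t - unifDensity a' t) :=
      unifMixtureDensity_sub_eq hε.le hmove ht0
    rw [← mul_assoc, ← h_gap]
    by_cases ht : |t| ≤ a'
    · have := negMulLog_le_add_mul_log_add_one (unifMixtureDensity_pos h_atom' ht0 ht)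
        (unifMixtureDensity_nonneg ρ t)
      linarith
    · rw [not_le] at ht
      have h_eq : g' t = g t := unifMixtureDensity_eq_of_lt_abs hε.le hmove ht0 (haa'.trans ht) ht
      rw [h_eq, sub_self, zero_mul, sub_self]
  calc 0 ≤ ε * ∫ t, (unifDensity a t - unifDensity a' t) * H t :=
        mul_nonneg hε.le (integral_unifDensity_sub_mul_nonneg ha haa'.le hH hH_anti)
    _ = ∫ t, ε * ((unifDensity a t - unifDensity a' t) * H t) := (integral_const_mul _ _).symm
    _ ≤ _ := by
      refine integral_mono_ae ?_
        (integrable_negMulLog_unifMixtureDensity_sub ha haa' hε hmass hmove)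
        ((volume.ae_ne 0).mono h_tangent)
      simp_rw [sub_mul]
      exact ((integrable_unifDensity_mul (hH.mono_set (Icc_subset_Icc (by linarith) haa'.le))).sub
        (integrable_unifDensity_mul hH)).const_mul ε

end transport

theorem radial_mass_transport_entropy_mono_general
    (a a' ε : ℝ) (ha : 0 < a) (haa' : a < a') (hε : 0 < ε)
    (ρ ρ' : Measure ℝ) [IsProbabilityMeasure ρ] [IsProbabilityMeasure ρ']
    (hmass : ENNReal.ofReal ε ≤ ρ {a})
    (hmove : ρ' + (ENNReal.ofReal ε) • Measure.dirac a
      = ρ + (ENNReal.ofReal ε) • Measure.dirac a')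
    (g g' : ℝ → ℝ)
    (hg : ∀ t, g t = ∫ x, (if |t| ≤ x then 1 / (2 * x) else 0) ∂ρ)
    (hg' : ∀ t, g' t = ∫ x, (if |t| ≤ x then 1 / (2 * x) else 0) ∂ρ') :
    ∫ t, Real.negMulLog (g t) ≤ ∫ t, Real.negMulLog (g' t) := by
  obtain rfl : g = unifMixtureDensity ρ := funext hg
  obtain rfl : g' = unifMixtureDensity ρ' := funext hg'
  exact integral_le_integral_of_integrable_sub
    (integrable_negMulLog_unifMixtureDensity_sub ha haa' hε hmass hmove)
    (integral_negMulLog_unifMixtureDensity_sub_nonneg ha haa' hε hmass hmove)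

/-- Moving mass of the radial distribution `ρ` outward (from `α` to `α' > α`)
cannot decrease the differential entropy of the density
`g(t) = ∫ (1/(2a)) 1{|t| ≤ a} dρ(a)`. -/
theorem radial_mass_transport_entropy_mono
    (r a a' ε : ℝ) (ha : 0 < a) (haa' : a < a') (ha'r : a' ≤ r) (hε : 0 < ε)
    (ρ ρ' : Measure ℝ) [IsProbabilityMeasure ρ] [IsProbabilityMeasure ρ']
    (hsupp : ρ (Set.Icc 0 r) = 1)
    (hmass : ENNReal.ofReal ε ≤ ρ {a})
    (hmove : ρ' + (ENNReal.ofReal ε) • Measure.dirac a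
      = ρ + (ENNReal.ofReal ε) • Measure.dirac a')
    (g g' : ℝ → ℝ)
    (hg : ∀ t, g t = ∫ x, (if |t| ≤ x then 1 / (2 * x) else 0) ∂ρ)
    (hg' : ∀ t, g' t = ∫ x, (if |t| ≤ x then 1 / (2 * x) else 0) ∂ρ') :
    ∫ t, Real.negMulLog (g t) ≤ ∫ t, Real.negMulLog (g' t) :=
  radial_mass_transport_entropy_mono_general a a' ε ha haa' hε ρ ρ' hmass hmove g g' hg hg'
end
end

section
/- For any random vectors X ∈ R^{d_x}, Y ∈ R^{d_y}: sup over matrices A_x ∈ R^{d_x×d_x}, A_y ∈ R^{d_y×d_y} and vectors b_x, b_y of SI(A_xX + b_x; A_yY + b_y) equals sup_{(θ,φ) ∈ S^{d_x-1}×S^{d_y-1}} I(θᵀX; φᵀY). Moreover, if (θ*, φ*) attains the latter supremum, then the matrices A_x* with first row θ* and all other rows zero (and b_x = 0), and analogously A_y* with first row φ*, attain the former. -/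
open MeasureTheory ProbabilityTheory Real
open scoped ENNReal ProbabilityTheory

noncomputable section

/-! Every slice of an affine image is an affine function of a slice of the original vector,
`⟪θ, A x + b⟫ = ⟪Aᵀ θ, x⟫ + ⟪θ, b⟫`. Mutual information is unchanged by injective affine maps of
either variable and vanishes when one variable is constant, so the MI of every slice of the
processed pair is at most the supremum over unit directions, and so is its average, the SMI.
For the rank-one matrix with first row `θ*` the `θ`-slice is `θ₀ ⟪θ*, x⟫`, and `θ₀ ≠ 0` for
almost every `θ` on the sphere because a proper subspace is null; hence its SMI is exactly
`I(θ*ᵀX; φ*ᵀY)`. -/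

open Matrix

section KLDivergence

variable {α β : Type*} [MeasurableSpace α] [MeasurableSpace β]

lemma klD_self (ν : Measure α) [SigmaFinite ν] : klD ν ν = 0 := by
  have hllr : llr ν ν =ᵐ[ν] 0 := by
    filter_upwards [Measure.rnDeriv_self ν] with x hx
    simp [llr, hx]
  rw [klD, if_pos ⟨Measure.AbsolutelyContinuous.rfl,
    (integrable_congr hllr).2 (integrable_zero _ _ _)⟩, integral_congr_ae hllr]
  simp

lemma klD_map_equiv (e : α ≃ᵐ β) (μ ν : Measure α) [SigmaFinite μ] [SigmaFinite ν] :
    klD (μ.map e) (ν.map e) = klD μ ν := by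
  have hac : μ.map e ≪ ν.map e ↔ μ ≪ ν := by
    refine ⟨fun h => ?_, fun h => h.map e.measurable⟩
    simpa [Measure.map_map e.symm.measurable e.measurable] using h.map e.symm.measurable
  by_cases hμν : μ ≪ ν
  · have hllr : (fun x => llr (μ.map e) (ν.map e) (e x)) =ᵐ[μ] llr μ ν := by
      filter_upwards [hμν.ae_le (e.measurableEmbedding.rnDeriv_map μ ν)] with x hx
      simp [llr, hx]
    have hint : Integrable (llr (μ.map e) (ν.map e)) (μ.map e) ↔ Integrable (llr μ ν) μ := by
      rw [integrable_map_equiv]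
      exact integrable_congr hllr
    rw [klD, klD]
    by_cases hI : Integrable (llr μ ν) μ
    · rw [if_pos ⟨hac.2 hμν, hint.2 hI⟩, if_pos ⟨hμν, hI⟩, integral_map_equiv e,
        integral_congr_ae hllr]
    · rw [if_neg fun h => hI (hint.1 h.2), if_neg fun h => hI h.2]
  · rw [klD, klD, if_neg fun h => hμν (hac.1 h.1), if_neg fun h => hμν h.1]

end KLDivergence

section MutualInformation

variable {Ω α β α' β' : Type*} [MeasurableSpace Ω] [MeasurableSpace α] [MeasurableSpace β]
  [MeasurableSpace α'] [MeasurableSpace β'] {μ : Measure Ω} {A : Ω → α} {B : Ω → β}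

lemma MI_map_equiv [IsFiniteMeasure μ] (e : α ≃ᵐ α') (f : β ≃ᵐ β')
    (hA : Measurable A) (hB : Measurable B) :
    MI μ (fun ω => e (A ω)) (fun ω => f (B ω)) = MI μ A B := by
  have hjoint : μ.map (fun ω => (e (A ω), f (B ω)))
      = (μ.map fun ω => (A ω, B ω)).map (e.prodCongr f) := by
    rw [Measure.map_map (e.prodCongr f).measurable (hA.prodMk hB)]
    rfl
  have hprod : (μ.map fun ω => e (A ω)).prod (μ.map fun ω => f (B ω))
      = ((μ.map A).prod (μ.map B)).map (e.prodCongr f) :=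
    (Measure.map_map e.measurable hA).symm ▸ (Measure.map_map f.measurable hB).symm ▸
      Measure.map_prod_map _ _ e.measurable f.measurable
  rw [MI, MI, hjoint, hprod, klD_map_equiv]

variable [IsProbabilityMeasure μ]

lemma MI_const_left {γ : Type*} [MeasurableSpace γ] (c : γ) (hB : Measurable B) :
    MI μ (fun _ => c) B = 0 := by
  rw [MI, Measure.map_const, measure_univ, one_smul,
    show (fun ω => (c, B ω)) = Prod.mk c ∘ B from rfl,
    ← Measure.map_map measurable_prodMk_left hB, Measure.dirac_prod]
  exact klD_self _

lemma MI_const_right {γ : Type*} [MeasurableSpace γ] (hA : Measurable A) (c : γ) :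
    MI μ A (fun _ => c) = 0 := by
  rw [MI, Measure.map_const, measure_univ, one_smul,
    show (fun ω => (A ω, c)) = (fun a => (a, c)) ∘ A from rfl,
    ← Measure.map_map measurable_prodMk_right hA, Measure.prod_dirac]
  exact klD_self _

lemma MI_mul_add {X Y : Ω → ℝ} (hX : Measurable X) (hY : Measurable Y) {s t : ℝ}
    (hs : s ≠ 0) (ht : t ≠ 0) (a b : ℝ) :
    MI μ (fun ω => s * X ω + a) (fun ω => t * Y ω + b) = MI μ X Y :=
  MI_map_equiv ((Homeomorph.mulLeft₀ s hs).trans (Homeomorph.addRight a)).toMeasurableEquiv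
    ((Homeomorph.mulLeft₀ t ht).trans (Homeomorph.addRight b)).toMeasurableEquiv hX hY

lemma MI_mul {X Y : Ω → ℝ} (hX : Measurable X) (hY : Measurable Y) {s t : ℝ}
    (hs : s ≠ 0) (ht : t ≠ 0) :
    MI μ (fun ω => s * X ω) (fun ω => t * Y ω) = MI μ X Y := by
  simpa only [add_zero] using MI_mul_add hX hY hs ht 0 0

end MutualInformation

lemma exists_mem_sphere_inner_eq_mul {E : Type*} [NormedAddCommGroup E] [InnerProductSpace ℝ E]
    {w : E} (hw : w ≠ 0) :
    ∃ u ∈ Metric.sphere (0 : E) 1, ∀ x, (inner ℝ w x : ℝ) = ‖w‖ * inner ℝ u x := by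
  refine ⟨‖w‖⁻¹ • w, ?_, fun x => ?_⟩
  · rw [mem_sphere_zero_iff_norm, norm_smul, norm_inv, norm_norm,
      inv_mul_cancel₀ (norm_ne_zero_iff.2 hw)]
  · rw [real_inner_smul_left, mul_inv_cancel_left₀ (norm_ne_zero_iff.2 hw)]

section Slices

variable {Ω E F : Type*} [MeasurableSpace Ω] {μ : Measure Ω} [IsProbabilityMeasure μ]
  [NormedAddCommGroup E] [InnerProductSpace ℝ E] [MeasurableSpace E] [OpensMeasurableSpace E]
  [NormedAddCommGroup F] [InnerProductSpace ℝ F] [MeasurableSpace F] [OpensMeasurableSpace F]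
  {X : Ω → E} {Y : Ω → F}

lemma MI_inner_add_le_iSup (hX : Measurable X) (hY : Measurable Y) (w : E) (v : F) (a b : ℝ) :
    MI μ (fun ω => (inner ℝ w (X ω) : ℝ) + a) (fun ω => (inner ℝ v (Y ω) : ℝ) + b)
      ≤ ⨆ θ ∈ Metric.sphere (0 : E) 1, ⨆ φ ∈ Metric.sphere (0 : F) 1,
          MI μ (fun ω => (inner ℝ θ (X ω) : ℝ)) fun ω => (inner ℝ φ (Y ω) : ℝ) := by
  have hinnerX (u : E) : Measurable fun ω => (inner ℝ u (X ω) : ℝ) :=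
    (continuous_const.inner continuous_id).measurable.comp hX
  have hinnerY (u : F) : Measurable fun ω => (inner ℝ u (Y ω) : ℝ) :=
    (continuous_const.inner continuous_id).measurable.comp hY
  rcases eq_or_ne w 0 with rfl | hw
  · simp only [inner_zero_left, zero_add]
    rw [MI_const_left a ((hinnerY v).add_const b)]
    exact zero_le
  rcases eq_or_ne v 0 with rfl | hv
  · simp only [inner_zero_left, zero_add]
    rw [MI_const_right ((hinnerX w).add_const a) b]
    exact zero_le
  obtain ⟨θ, hθ, hwθ⟩ := exists_mem_sphere_inner_eq_mul hw
  obtain ⟨φ, hφ, hvφ⟩ := exists_mem_sphere_inner_eq_mul hv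
  simp only [hwθ, hvφ]
  rw [MI_mul_add (hinnerX θ) (hinnerY φ) (norm_ne_zero_iff.2 hw) (norm_ne_zero_iff.2 hv)]
  exact le_iSup₂_of_le θ hθ (le_iSup₂_of_le φ hφ le_rfl)

end Slices

open scoped Pointwise in
lemma sphereUnif_submodule_eq_zero {d : ℕ} (S : Submodule ℝ (Ed d)) (hS : S ≠ ⊤) :
    sphereUnif d S = 0 := by
  rcases eq_or_ne d 0 with rfl | hd
  · exact absurd (Subsingleton.elim S ⊤) hS
  have hSm : MeasurableSet (S : Set (Ed d)) := S.closed_of_finiteDimensional.measurableSet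
  rw [sphereUnif, if_neg hd, Measure.smul_apply, Measure.map_apply measurable_subtype_coe hSm,
    Measure.toSphere_apply' _ (measurable_subtype_coe hSm)]
  have hcone : Set.Ioo (0 : ℝ) 1 • (Subtype.val '' (Subtype.val ⁻¹' (S : Set (Ed d)) :
      Set (Metric.sphere (0 : Ed d) 1))) ⊆ (S : Set (Ed d)) := by
    rintro _ ⟨r, -, _, ⟨u, hu, rfl⟩, rfl⟩
    exact S.smul_mem r hu
  rw [measure_mono_null hcone (Measure.addHaar_submodule _ S hS)]
  simp

lemma sphereUnif_ae_apply_ne_zero {d : ℕ} (i : Fin d) : ∀ᵐ θ ∂(sphereUnif d), θ i ≠ 0 := by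
  have hker : LinearMap.ker (EuclideanSpace.proj i : Ed d →L[ℝ] ℝ).toLinearMap ≠ ⊤ := by
    intro h
    have : EuclideanSpace.single i (1 : ℝ) ∈ LinearMap.ker (EuclideanSpace.proj i).toLinearMap :=
      h ▸ trivial
    simp at this
  rw [ae_iff]
  convert sphereUnif_submodule_eq_zero _ hker using 2
  ext
  simp

lemma inner_toLp_mulVec_add {d : ℕ} (A : Matrix (Fin d) (Fin d) ℝ) (b : Fin d → ℝ) (θ x : Ed d) :
    (inner ℝ θ ((WithLp.equiv 2 (Fin d → ℝ)).symm (A.mulVec (fun i => x i) + b)) : ℝ) =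
     inner ℝ (WithLp.toLp 2 (θ.ofLp ᵥ* A)) x + θ.ofLp ⬝ᵥ b := by
  simp only [WithLp.equiv_symm_apply, EuclideanSpace.inner_eq_star_dotProduct, star_trivial]
  rw [dotProduct_comm, dotProduct_add, dotProduct_mulVec, dotProduct_comm x.ofLp]

lemma vecMul_firstRow {d : ℕ} (hd : 0 < d) (v w : Fin d → ℝ) :
    v ᵥ* (Matrix.of fun i j => if (i : Fin d).val = 0 then w j else 0) = v ⟨0, hd⟩ • w := by
  ext j
  rw [vecMul, dotProduct, Finset.sum_eq_single ⟨0, hd⟩] <;> simp +contextual [Fin.ext_iff]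

lemma inner_toLp_firstRow_mulVec {d : ℕ} (hd : 0 < d) (w θ x : Ed d) :
    (inner ℝ θ ((WithLp.equiv 2 (Fin d → ℝ)).symm
        ((Matrix.of fun i j => if (i : Fin d).val = 0 then w j else 0).mulVec
          fun i => x i)) : ℝ)
      = θ ⟨0, hd⟩ * inner ℝ w x := by
  simpa [vecMul_firstRow hd, inner_smul_left] using inner_toLp_mulVec_add
    (Matrix.of fun i j => if (i : Fin d).val = 0 then w j else 0) 0 θ x

section SlicedMutualInformation

variable {Ω : Type*} [MeasurableSpace Ω] {μ : Measure Ω} [IsProbabilityMeasure μ]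
  {dx dy : ℕ} {X : Ω → Ed dx} {Y : Ω → Ed dy}

lemma SMI_affine_le_iSup (hX : Measurable X) (hY : Measurable Y)
    (Ax : Matrix (Fin dx) (Fin dx) ℝ) (Ay : Matrix (Fin dy) (Fin dy) ℝ)
    (bx : Fin dx → ℝ) (by' : Fin dy → ℝ) :
    SMI μ (fun ω => ((WithLp.equiv 2 (Fin dx → ℝ)).symm
            (Ax.mulVec (fun i => X ω i) + bx) : Ed dx))
          (fun ω => ((WithLp.equiv 2 (Fin dy → ℝ)).symm
            (Ay.mulVec (fun i => Y ω i) + by') : Ed dy))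
      ≤ ⨆ θ ∈ Metric.sphere (0 : Ed dx) 1, ⨆ φ ∈ Metric.sphere (0 : Ed dy) 1,
          MI μ (fun ω => (inner ℝ θ (X ω) : ℝ)) fun ω => (inner ℝ φ (Y ω) : ℝ) := by
  rw [SMI]
  calc _ ≤ ∫⁻ _, ∫⁻ _, (⨆ θ ∈ Metric.sphere (0 : Ed dx) 1, ⨆ φ ∈ Metric.sphere (0 : Ed dy) 1,
          MI μ (fun ω => (inner ℝ θ (X ω) : ℝ)) fun ω => (inner ℝ φ (Y ω) : ℝ))
          ∂(sphereUnif dy) ∂(sphereUnif dx) := by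
        refine lintegral_mono fun θ => lintegral_mono fun φ => ?_
        simp only [inner_toLp_mulVec_add]
        exact MI_inner_add_le_iSup hX hY _ _ _ _
    _ = _ := by simp

lemma SMI_firstRow_eq (hdx : 0 < dx) (hdy : 0 < dy) (hX : Measurable X) (hY : Measurable Y)
    (θs : Ed dx) (φs : Ed dy) :
    SMI μ (fun ω => ((WithLp.equiv 2 (Fin dx → ℝ)).symm
            ((Matrix.of fun i j => if (i : Fin dx).val = 0 then θs j else 0).mulVec
              fun i => X ω i) : Ed dx))
          (fun ω => ((WithLp.equiv 2 (Fin dy → ℝ)).symm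
            ((Matrix.of fun i j => if (i : Fin dy).val = 0 then φs j else 0).mulVec
              fun i => Y ω i) : Ed dy))
      = MI μ (fun ω => (inner ℝ θs (X ω) : ℝ)) fun ω => (inner ℝ φs (Y ω) : ℝ) := by
  rw [SMI]
  calc _ = ∫⁻ _, ∫⁻ _, MI μ (fun ω => (inner ℝ θs (X ω) : ℝ)) (fun ω => (inner ℝ φs (Y ω) : ℝ))
          ∂(sphereUnif dy) ∂(sphereUnif dx) := by
        refine lintegral_congr_ae ?_
        filter_upwards [sphereUnif_ae_apply_ne_zero ⟨0, hdx⟩] with θ hθ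
        refine lintegral_congr_ae ?_
        filter_upwards [sphereUnif_ae_apply_ne_zero ⟨0, hdy⟩] with φ hφ
        simp only [inner_toLp_firstRow_mulVec hdx, inner_toLp_firstRow_mulVec hdy]
        exact MI_mul hX.const_inner hY.const_inner hθ hφ
    _ = _ := by simp

end SlicedMutualInformation

open Matrix in
/-- The supremum of SMI over arbitrary affine transformations of `X` and `Y`
equals the supremum of projected MI over the unit spheres, and it is attained by the rank-one
matrices whose first row is an optimal slicing direction (with zero bias). -/
theorem smi_sup_linear_processing
    {Ω : Type*} [MeasurableSpace Ω] {dx dy : ℕ} (hdx : 0 < dx) (hdy : 0 < dy)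
    (μ : Measure Ω) [IsProbabilityMeasure μ]
    (X : Ω → Ed dx) (Y : Ω → Ed dy) (hX : Measurable X) (hY : Measurable Y) :
    (⨆ (Ax : Matrix (Fin dx) (Fin dx) ℝ) (Ay : Matrix (Fin dy) (Fin dy) ℝ)
        (bx : Fin dx → ℝ) (by' : Fin dy → ℝ),
        SMI μ
          (fun ω => ((WithLp.equiv 2 (Fin dx → ℝ)).symm
            (Ax.mulVec (fun i => X ω i) + bx) : Ed dx))
          (fun ω => ((WithLp.equiv 2 (Fin dy → ℝ)).symm
            (Ay.mulVec (fun i => Y ω i) + by') : Ed dy)))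
      = (⨆ θ ∈ Metric.sphere (0 : Ed dx) 1, ⨆ φ ∈ Metric.sphere (0 : Ed dy) 1,
          MI μ (fun ω => (inner ℝ θ (X ω) : ℝ)) fun ω => (inner ℝ φ (Y ω) : ℝ)) ∧
    ∀ θs ∈ Metric.sphere (0 : Ed dx) 1, ∀ φs ∈ Metric.sphere (0 : Ed dy) 1,
      (∀ θ ∈ Metric.sphere (0 : Ed dx) 1, ∀ φ ∈ Metric.sphere (0 : Ed dy) 1,
        MI μ (fun ω => (inner ℝ θ (X ω) : ℝ)) (fun ω => (inner ℝ φ (Y ω) : ℝ)) ≤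
          MI μ (fun ω => (inner ℝ θs (X ω) : ℝ)) fun ω => (inner ℝ φs (Y ω) : ℝ)) →
      SMI μ
          (fun ω => ((WithLp.equiv 2 (Fin dx → ℝ)).symm
            ((Matrix.of fun i j => if (i : Fin dx).val = 0 then θs j else 0).mulVec
              fun i => X ω i) : Ed dx))
          (fun ω => ((WithLp.equiv 2 (Fin dy → ℝ)).symm
            ((Matrix.of fun i j => if (i : Fin dy).val = 0 then φs j else 0).mulVec
              fun i => Y ω i) : Ed dy))
        = (⨆ θ ∈ Metric.sphere (0 : Ed dx) 1, ⨆ φ ∈ Metric.sphere (0 : Ed dy) 1,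
            MI μ (fun ω => (inner ℝ θ (X ω) : ℝ)) fun ω => (inner ℝ φ (Y ω) : ℝ)) := by
  refine ⟨le_antisymm ?_ ?_, fun θs hθs φs hφs hmax => ?_⟩
  · exact iSup_le fun Ax => iSup_le fun Ay => iSup_le fun bx => iSup_le fun by' =>
      SMI_affine_le_iSup hX hY Ax Ay bx by'
  · refine iSup₂_le fun θ _ => iSup₂_le fun φ _ => ?_
    rw [← SMI_firstRow_eq hdx hdy hX hY θ φ]
    refine le_iSup_of_le (Matrix.of fun i j => if (i : Fin dx).val = 0 then θ j else 0)
      (le_iSup_of_le (Matrix.of fun i j => if (i : Fin dy).val = 0 then φ j else 0)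
        (le_iSup_of_le 0 (le_iSup_of_le 0 ?_)))
    simp only [add_zero, le_refl]
  · rw [SMI_firstRow_eq hdx hdy hX hY θs φs]
    exact le_antisymm (le_iSup₂_of_le θs hθs (le_iSup₂_of_le φs hφs le_rfl))
      (iSup₂_le fun θ hθ => iSup₂_le (hmax θ hθ))

end
end
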